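/- arXiv:1701.00856 — 2 statements merged into one kernel-verified Lean document; each statement's English description precedes it below -/
import Mathlib

section
/- Let Σ be an r×r real symmetric positive definite matrix, Σ_X a p×p real symmetric positive definite matrix with positive definite square root Σ_X^{1/2}, β an r×p real matrix, and G_o an r×m real matrix with full column rank. If G_oᵀ β ≠ 0, then log det(I_p + Σ_X^{1/2} βᵀ G_o (G_oᵀ Σ G_o)⁻¹ G_oᵀ β Σ_X^{1/2}) > 0. -/
/-!
With `B = G_oᵀ β Σ_X^{1/2}` the matrix under the determinant is `I + Bᵀ (G_oᵀ Σ G_o)⁻¹ B`.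
Full column rank makes `G_oᵀ Σ G_o`, hence its inverse, positive definite, and `B ≠ 0` because
`Σ_X^{1/2}` is invertible, so `Bᵀ (G_oᵀ Σ G_o)⁻¹ B` is positive semidefinite and nonzero.
Its eigenvalues are then nonnegative and not all zero, so `det (I + ·) = ∏ (1 + λᵢ) > 1`.
-/

open Matrix

namespace Matrix

variable {m n : Type*} [Fintype n]

theorem mulVec_injective_of_rank_eq_card {K : Type*} [Field K] (A : Matrix m n K)
    (hA : A.rank = Fintype.card n) : Function.Injective A.mulVec := by
  have hker : Module.finrank K (LinearMap.ker A.mulVecLin) = 0 := by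
    have := LinearMap.finrank_range_add_finrank_ker A.mulVecLin
    rw [Module.finrank_fintype_fun_eq_card] at this
    change A.rank + _ = _ at this
    omega
  exact LinearMap.ker_eq_bot.mp (Submodule.finrank_eq_zero.mp hker)

variable {𝕜 : Type*} [RCLike 𝕜]

open scoped ComplexOrder in
theorem PosDef.conjTranspose_mul_mul_same_ne_zero [Fintype m] {A : Matrix n n 𝕜} (hA : A.PosDef)
    {B : Matrix n m 𝕜} (hB : B ≠ 0) : Bᴴ * A * B ≠ 0 := by
  obtain ⟨x, hx⟩ : ∃ x, B *ᵥ x ≠ 0 := by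
    simpa [ext_iff_mulVec] using hB
  intro h
  have := hA.dotProduct_mulVec_pos hx
  rw [star_mulVec, ← dotProduct_mulVec, mulVec_mulVec, mulVec_mulVec, h] at this
  simp at this

theorem IsHermitian.det_one_add [DecidableEq n] {A : Matrix n n 𝕜} (hA : A.IsHermitian) :
    (1 + A).det = ∏ i, (1 + (hA.eigenvalues i : 𝕜)) := by
  have h : 1 + A = cfc (fun x : ℝ ↦ 1 + x) A := by
    rw [cfc_add .., cfc_const_one .., cfc_id' ..]
  rw [h, hA.cfc_eq]
  simp [IsHermitian.cfc, -Unitary.conjStarAlgAut_apply]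

theorem PosSemidef.one_lt_det_one_add [DecidableEq n] {A : Matrix n n ℝ} (hA : A.PosSemidef)
    (h0 : A ≠ 0) : 1 < (1 + A).det := by
  obtain ⟨i, hi⟩ : ∃ i, hA.1.eigenvalues i ≠ 0 := by
    simpa [funext_iff] using (not_congr hA.1.eigenvalues_eq_zero_iff).mpr h0
  rw [hA.1.det_one_add]
  calc (1 : ℝ) = ∏ _i : n, 1 := by simp
    _ < _ := Finset.prod_lt_prod (fun _ _ ↦ one_pos)
        (fun j _ ↦ by simpa using hA.eigenvalues_nonneg j)
        ⟨i, Finset.mem_univ i, by simpa using (hA.eigenvalues_nonneg i).lt_of_ne' hi⟩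

end Matrix

theorem log_det_pos_of_bias_general
    {r p m : ℕ}
    (S : Matrix (Fin r) (Fin r) ℝ) (hS : S.PosDef)
    (Sx12 : Matrix (Fin p) (Fin p) ℝ) (hSx12 : Sx12.PosDef)
    (β : Matrix (Fin r) (Fin p) ℝ)
    (Go : Matrix (Fin r) (Fin m) ℝ) (hGo : Go.rank = m)
    (hbias : Goᵀ * β ≠ 0) :
    0 < Real.log
      ((1 : Matrix (Fin p) (Fin p) ℝ)
        + Sx12 * βᵀ * Go * (Goᵀ * S * Go)⁻¹ * Goᵀ * β * Sx12).det := by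
  have hGo_inj : Function.Injective Go.mulVec :=
    Go.mulVec_injective_of_rank_eq_card (by rw [hGo, Fintype.card_fin])
  have hGSG : (Goᵀ * S * Go).PosDef := by
    simpa only [conjTranspose_eq_transpose_of_trivial] using hS.conjTranspose_mul_mul_same hGo_inj
  set B := Goᵀ * β * Sx12 with hB
  have hB0 : B ≠ 0 := fun h ↦ hbias <| by
    rw [← mul_nonsing_inv_cancel_right Sx12 (Goᵀ * β) hSx12.det_pos.ne'.isUnit, ← hB, h,
      Matrix.zero_mul]
  have hM : Sx12 * βᵀ * Go * (Goᵀ * S * Go)⁻¹ * Goᵀ * β * Sx12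
      = Bᴴ * (Goᵀ * S * Go)⁻¹ * B := by
    have hSx12_symm : Sx12ᵀ = Sx12 := hSx12.isHermitian
    simp only [hB, conjTranspose_eq_transpose_of_trivial, transpose_mul, transpose_transpose,
      hSx12_symm, Matrix.mul_assoc]
  rw [hM]
  exact Real.log_pos <| (hGSG.inv.posSemidef.conjTranspose_mul_mul_same B).one_lt_det_one_add
    (hGSG.inv.conjTranspose_mul_mul_same_ne_zero hB0)

/-- If `G_oᵀ β ≠ 0`, then
`log det(I_p + Σ_X^{1/2} βᵀ G_o (G_oᵀ Σ G_o)⁻¹ G_oᵀ β Σ_X^{1/2}) > 0`. -/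
theorem log_det_pos_of_bias
    {r p m : ℕ}
    (S : Matrix (Fin r) (Fin r) ℝ) (hS : S.PosDef)
    (Sx : Matrix (Fin p) (Fin p) ℝ) (hSx : Sx.PosDef)
    (Sx12 : Matrix (Fin p) (Fin p) ℝ) (hSx12 : Sx12.PosDef)
    (hsq : Sx12 * Sx12 = Sx)
    (β : Matrix (Fin r) (Fin p) ℝ)
    (Go : Matrix (Fin r) (Fin m) ℝ) (hGo : Go.rank = m)
    (hbias : Goᵀ * β ≠ 0) :
    0 < Real.log
      ((1 : Matrix (Fin p) (Fin p) ℝ)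
        + Sx12 * βᵀ * Go * (Goᵀ * S * Go)⁻¹ * Goᵀ * β * Sx12).det :=
  log_det_pos_of_bias_general S hS Sx12 hSx12 β Go hGo hbias
end

section
/- Let S be an r×r real symmetric positive definite matrix, Σ_X a p×p real symmetric positive semidefinite matrix with positive semidefinite square root Σ_X^{1/2}, β an r×p real matrix, and let (G, G_o) be an orthogonal partition with G of size r×j and G_o of size r×(r−j), where 1 ≤ j ≤ r−1. Then log det(Gᵀ S G) + log det(G_oᵀ (S + β Σ_X βᵀ) G_o) − log det(S) ≥ log det(I_p + Σ_X^{1/2} βᵀ G_o (G_oᵀ S G_o)⁻¹ G_oᵀ β Σ_X^{1/2}). -/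
/-!
Let `Q = (G, G_o)`. Since `Q` is orthogonal, `det S = det (Qᵀ S Q)`, and `Qᵀ S Q` is a positive
definite block matrix with diagonal blocks `Gᵀ S G`, `G_oᵀ S G_o` and off-diagonal block
`B = Gᵀ S G_o`. Its Schur complement `G_oᵀ S G_o - Bᵀ (Gᵀ S G)⁻¹ B` differs from `G_oᵀ S G_o` by a
positive semidefinite matrix, and `det` is monotone on the positive semidefinite cone, which gives
Fischer's inequality `det S ≤ det (Gᵀ S G) * det (G_oᵀ S G_o)`. Writing
`β Σ_X βᵀ = (β Σ_X^{1/2}) (β Σ_X^{1/2})ᵀ`, the matrix determinant lemma factors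
`det (G_oᵀ (S + β Σ_X βᵀ) G_o)` as `det (G_oᵀ S G_o)` times the determinant inside the logarithm
on the left, which is at least `1`. Taking logarithms gives the bound.
-/

open Matrix

namespace Matrix

variable {m n o : Type*} [Fintype m] [Fintype n] [Fintype o]
  [DecidableEq m] [DecidableEq n] [DecidableEq o]

theorem PosSemidef.one_le_det_one_add {P : Matrix n n ℝ} (hP : P.PosSemidef) :
    1 ≤ (1 + P).det := by
  set U := hP.1.eigenvectorUnitary
  rw [hP.1.spectral_theorem, ← map_one (Unitary.conjStarAlgAut ℝ _ U), ← map_add,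
    Unitary.conjStarAlgAut_apply, det_conj_of_mul_eq_one (Unitary.mul_star_self_of_mem U.2)
      (Unitary.star_mul_self_of_mem U.2), ← diagonal_one, diagonal_add, det_diagonal]
  exact Finset.one_le_prod fun i _ => by simpa using hP.eigenvalues_nonneg i

theorem PosSemidef.det_le_det_add {X P : Matrix n n ℝ} (hX : X.PosSemidef)
    (hP : P.PosSemidef) : X.det ≤ (X + P).det := by
  by_cases hX0 : X.det = 0
  · exact hX0 ▸ (hX.add hP).det_nonneg
  have hXpos : X.PosDef := hX.posDef_iff_det_ne_zero.mpr hX0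
  open scoped MatrixOrder in
  obtain ⟨B, rfl⟩ := CStarAlgebra.nonneg_iff_eq_star_mul_self.mp hP.nonneg
  have hBXB : (B * X⁻¹ * Bᵀ).PosSemidef := by
    simpa using hXpos.inv.posSemidef.mul_mul_conjTranspose_same B
  calc X.det = X.det * 1 := (mul_one _).symm
    _ ≤ X.det * (1 + B * X⁻¹ * Bᵀ).det := by
      gcongr
      · exact hXpos.det_pos.le
      · exact hBXB.one_le_det_one_add
    _ = (X + Bᵀ * B).det := (det_add_mul _ _ (isUnit_iff_ne_zero.mpr hX0)).symm

omit [DecidableEq m] in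
theorem PosDef.transpose_mul_mul_same_of_transpose_mul_self {S : Matrix m m ℝ}
    (hS : S.PosDef) {K : Matrix m n ℝ} (hK : Kᵀ * K = 1) : (Kᵀ * S * K).PosDef := by
  have hinj : Function.Injective K.mulVec :=
    Function.LeftInverse.injective (g := Kᵀ.mulVec) fun v => by
      rw [mulVec_mulVec, hK, one_mulVec]
  simpa using hS.conjTranspose_mul_mul_same hinj

theorem det_fromBlocks_le_of_posSemidef {A : Matrix m m ℝ} {B : Matrix m n ℝ}
    {D : Matrix n n ℝ} (hA : A.PosDef) (hM : (fromBlocks A B Bᵀ D).PosSemidef) :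
    (fromBlocks A B Bᵀ D).det ≤ A.det * D.det := by
  have : Invertible A := A.invertibleOfIsUnitDet hA.det_pos.ne'.isUnit
  have hSchur : (D - Bᵀ * A⁻¹ * B).PosSemidef := by
    simpa using (PosDef.fromBlocks₁₁ B D hA).mp (by simpa using hM)
  have hBAB : (Bᵀ * A⁻¹ * B).PosSemidef := by
    simpa using hA.inv.posSemidef.conjTranspose_mul_mul_same B
  rw [det_fromBlocks₁₁, invOf_eq_nonsing_inv]
  gcongr
  · exact hA.det_pos.le
  · simpa using hSchur.det_le_det_add hBAB

theorem det_transpose_mul_mul_of_transpose_mul_self {R : Type*} [CommRing R]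
    {Q : Matrix m n R} (hQ : Qᵀ * Q = 1) (hcard : Fintype.card m = Fintype.card n)
    (S : Matrix m m R) : (Qᵀ * S * Q).det = S.det :=
  det_conj_of_mul_eq_one hQ ((mul_eq_one_comm_of_card_eq _ _ R hcard.symm).mp hQ)

theorem PosDef.det_le_det_mul_det_of_orthogonal_partition {S : Matrix m m ℝ} (hS : S.PosDef)
    {G : Matrix m n ℝ} {Go : Matrix m o ℝ} (hG : Gᵀ * G = 1) (hGo : Goᵀ * Go = 1)
    (hGGo : Gᵀ * Go = 0) (hcard : Fintype.card m = Fintype.card n + Fintype.card o) :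
    S.det ≤ (Gᵀ * S * G).det * (Goᵀ * S * Go).det := by
  set Q := fromCols G Go
  have hGoG : Goᵀ * G = 0 := by simpa [transpose_mul] using congrArg Matrix.transpose hGGo
  have hQ : Qᵀ * Q = 1 := by
    rw [transpose_fromCols, fromRows_mul_fromCols, hG, hGo, hGGo, hGoG, fromBlocks_one]
  have hblocks : Qᵀ * S * Q =
      fromBlocks (Gᵀ * S * G) (Gᵀ * S * Go) (Gᵀ * S * Go)ᵀ (Goᵀ * S * Go) := by
    rw [transpose_fromCols, fromRows_mul, fromRows_mul_fromCols, transpose_mul, transpose_mul,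
      transpose_transpose, (isHermitian_iff_isSymm.mp hS.isHermitian).eq]
    simp only [Matrix.mul_assoc]
  have hQSQ : (Qᵀ * S * Q).PosDef := hS.transpose_mul_mul_same_of_transpose_mul_self hQ
  rw [← det_transpose_mul_mul_of_transpose_mul_self hQ (by simp [hcard]) S, hblocks]
  exact det_fromBlocks_le_of_posSemidef (hS.transpose_mul_mul_same_of_transpose_mul_self hG)
    (hblocks ▸ hQSQ.posSemidef)

end Matrix

theorem log_lik_ratio_lower_bound_general
    {r p j : ℕ} (hj2 : j ≤ r - 1)
    (S : Matrix (Fin r) (Fin r) ℝ) (hS : S.PosDef)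
    (Sx : Matrix (Fin p) (Fin p) ℝ)
    (Sx12 : Matrix (Fin p) (Fin p) ℝ) (hSx12 : Sx12.PosSemidef)
    (hsq : Sx12 * Sx12 = Sx)
    (β : Matrix (Fin r) (Fin p) ℝ)
    (G : Matrix (Fin r) (Fin j) ℝ) (Go : Matrix (Fin r) (Fin (r - j)) ℝ)
    (hG : Gᵀ * G = 1) (hGo : Goᵀ * Go = 1) (hGGo : Gᵀ * Go = 0) :
    Real.log ((1 : Matrix (Fin p) (Fin p) ℝ)
        + Sx12 * βᵀ * Go * (Goᵀ * S * Go)⁻¹ * Goᵀ * β * Sx12).det ≤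
      Real.log (Gᵀ * S * G).det
        + Real.log (Goᵀ * (S + β * Sx * βᵀ) * Go).det
        - Real.log S.det := by
  set D := Goᵀ * S * Go
  set W := Sx12 * βᵀ * Go * D⁻¹ * Goᵀ * β * Sx12
  have hD : D.PosDef := hS.transpose_mul_mul_same_of_transpose_mul_self hGo
  have hA : (Gᵀ * S * G).PosDef := hS.transpose_mul_mul_same_of_transpose_mul_self hG
  have hW : W.PosSemidef := by
    simpa [W, transpose_mul, (isHermitian_iff_isSymm.mp hSx12.isHermitian).eq, Matrix.mul_assoc]
      using hD.inv.posSemidef.mul_mul_conjTranspose_same (Sx12 * βᵀ * Go)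
  have hfactor : (Goᵀ * (S + β * Sx * βᵀ) * Go).det = D.det * (1 + W).det := by
    have hsplit : Goᵀ * (S + β * Sx * βᵀ) * Go = D + (Goᵀ * β * Sx12) * (Sx12 * βᵀ * Go) := by
      simp only [D, ← hsq, Matrix.mul_add, Matrix.add_mul, Matrix.mul_assoc]
    rw [hsplit, det_add_mul _ _ hD.det_pos.ne'.isUnit]
    simp only [W, Matrix.mul_assoc]
  have hfischer : S.det ≤ (Gᵀ * S * G).det * D.det :=
    hS.det_le_det_mul_det_of_orthogonal_partition hG hGo hGGo
      (by simp only [Fintype.card_fin]; omega)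
  have hlogS := Real.log_le_log hS.det_pos hfischer
  rw [Real.log_mul hA.det_pos.ne' hD.det_pos.ne'] at hlogS
  rw [hfactor, Real.log_mul hD.det_pos.ne' (by linarith [hW.one_le_det_one_add])]
  linarith

/-- Lower bound for the envelope log-likelihood ratio:
`log det(Gᵀ S G) + log det(G_oᵀ (S + β Σ_X βᵀ) G_o) − log det S
  ≥ log det(I_p + Σ_X^{1/2} βᵀ G_o (G_oᵀ S G_o)⁻¹ G_oᵀ β Σ_X^{1/2})`. -/
theorem log_lik_ratio_lower_bound
    {r p j : ℕ} (hj1 : 1 ≤ j) (hj2 : j ≤ r - 1)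
    (S : Matrix (Fin r) (Fin r) ℝ) (hS : S.PosDef)
    (Sx : Matrix (Fin p) (Fin p) ℝ) (hSx : Sx.PosSemidef)
    (Sx12 : Matrix (Fin p) (Fin p) ℝ) (hSx12 : Sx12.PosSemidef)
    (hsq : Sx12 * Sx12 = Sx)
    (β : Matrix (Fin r) (Fin p) ℝ)
    (G : Matrix (Fin r) (Fin j) ℝ) (Go : Matrix (Fin r) (Fin (r - j)) ℝ)
    (hG : Gᵀ * G = 1) (hGo : Goᵀ * Go = 1) (hGGo : Gᵀ * Go = 0) :
    Real.log ((1 : Matrix (Fin p) (Fin p) ℝ)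
        + Sx12 * βᵀ * Go * (Goᵀ * S * Go)⁻¹ * Goᵀ * β * Sx12).det ≤
      Real.log (Gᵀ * S * G).det
        + Real.log (Goᵀ * (S + β * Sx * βᵀ) * Go).det
        - Real.log S.det :=
  log_lik_ratio_lower_bound_general hj2 S hS Sx Sx12 hSx12 hsq β G Go hG hGo hGGo
end
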